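/- Let (M,d) be a separable metric space with its Borel σ-algebra, μ a Borel probability measure on M with μ({v ∈ M : d(u,v) = r}) = 0 for all u ∈ M and r ≥ 0, and let X₁, X₂, … be an i.i.d. sequence with law μ. Assume the entropy condition: (1/n)·E[ log card{ b ∈ {0,1}ⁿ : there exist u,v ∈ M with b_i = 1[d(u,X_i) ≤ d(u,v)] for all i = 1,…,n } ] → 0 as n → ∞. Then for every ε > 0, lim_{n→∞} sup_{u ∈ M, τ ∈ [1/n,1]} P*( there exists a τ-th empirical local quantile X_j at u with |F_μ(u,X_j) − τ| > ε ) = 0, where P* denotes outer probability. -/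

import Mathlib

/-!
Fix a centre `u`. Everything happens on the real sample `dist u (X i)`, whose distribution
function `F(s) = μ(closedBall u s)` is continuous because spheres are null. A `τ`-th empirical
quantile sits at a radius `r` where the empirical distribution function `G` jumps past `τ`:
`G r ≥ τ > G s` for `s < r`, so `|F r - τ| ≤ sup |G - F|` by continuity of `F`. Choosing
radii `t_l` with `F t_l = l / m`, monotonicity bounds `sup |G - F|` by `1 / m` plus the
deviations at these `m - 1` points, each of which Chebyshev's inequality controls with
probability `1 / (4 n δ²)`. The resulting bound `m / (4 n δ²)` is uniform in `u` and `τ`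
and tends to `0`.
-/

open MeasureTheory Metric ProbabilityTheory Filter

/-- The empirical metric distribution function
`F_n(u,v) = (1/n)·#{i : dist u (x i) ≤ dist u v}`. -/
noncomputable def emdf {M : Type*} [MetricSpace M] {n : ℕ}
    (x : Fin n → M) (u v : M) : ℝ :=
  ((Finset.univ.filter fun i => dist u (x i) ≤ dist u v).card : ℝ) / n

/-- The metric distribution function `F_μ(u,v) = μ(closedBall u (dist u v))`. -/
noncomputable def mdf {M : Type*} [MetricSpace M] [MeasurableSpace M]
    (μ : Measure M) (u v : M) : ℝ :=
  (μ (closedBall u (dist u v))).toReal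

/-- `x j` is a `τ`-th empirical local quantile at `u`. -/
def IsEmpLocQuantile {M : Type*} [MetricSpace M] {n : ℕ}
    (x : Fin n → M) (u : M) (τ : ℝ) (j : Fin n) : Prop :=
  τ ≤ emdf x u (x j) ∧ ∀ i : Fin n, τ ≤ emdf x u (x i) → emdf x u (x j) ≤ emdf x u (x i)

open scoped ENNReal Topology

open Finset in
noncomputable def empiricalCDF {n : ℕ} (y : Fin n → ℝ) (s : ℝ) : ℝ :=
  (#{i | y i ≤ s} : ℝ) / n

section EmpiricalCDF

variable {n : ℕ} (y : Fin n → ℝ)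

theorem empiricalCDF_nonneg (s : ℝ) : 0 ≤ empiricalCDF y s := by
  unfold empiricalCDF; positivity

theorem empiricalCDF_le_one (s : ℝ) : empiricalCDF y s ≤ 1 := by
  unfold empiricalCDF
  refine div_le_one_of_le₀ ?_ n.cast_nonneg
  exact_mod_cast (Finset.card_filter_le _ _).trans (Finset.card_fin n).le

theorem monotone_empiricalCDF : Monotone (empiricalCDF y) := fun _ _ hst => by
  unfold empiricalCDF
  gcongr

theorem empiricalCDF_lt_empiricalCDF {s : ℝ} {j : Fin n} (hs : s < y j) :
    empiricalCDF y s < empiricalCDF y (y j) := by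
  have hn : (0 : ℝ) < n := by exact_mod_cast j.pos
  unfold empiricalCDF
  gcongr
  refine Finset.ssubset_iff_of_subset (Finset.monotone_filter_right _ fun i _ h => h.trans hs.le)
    |>.2 ⟨j, by simp, by simp [hs]⟩

end EmpiricalCDF

section Grid

variable {m : ℕ} (hm : 0 < m)
include hm

theorem exists_grid_point_gt {x : ℝ} (hx0 : 0 ≤ x) (hx1 : x < 1 - 1 / m) :
    ∃ l : ℕ, 0 < l ∧ l < m ∧ x < l / m ∧ (l : ℝ) / m ≤ x + 1 / m := by
  have hm' : (0 : ℝ) < m := by exact_mod_cast hm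
  have hy := Nat.floor_le (mul_nonneg hm'.le hx0)
  have hy' := Nat.lt_floor_add_one (m * x)
  have hxm : m * x < m - 1 := by
    have := mul_lt_mul_of_pos_left hx1 hm'
    rwa [mul_sub, mul_one, mul_one_div_cancel hm'.ne'] at this
  refine ⟨⌊m * x⌋₊ + 1, Nat.succ_pos _, ?_, ?_, ?_⟩
  · exact_mod_cast (show ((⌊m * x⌋₊ + 1 : ℕ) : ℝ) < m by push_cast; linarith)
  · rw [lt_div_iff₀ hm', mul_comm]; push_cast; linarith
  · rw [div_le_iff₀ hm', add_mul, one_div_mul_cancel hm'.ne', mul_comm x]; push_cast; linarith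

theorem exists_grid_point_lt {x : ℝ} (hx0 : 1 / m < x) (hx1 : x ≤ 1) :
    ∃ l : ℕ, 0 < l ∧ l < m ∧ (l : ℝ) / m < x ∧ x ≤ l / m + 1 / m := by
  have hm' : (0 : ℝ) < m := by exact_mod_cast hm
  have hxm : 1 < m * x := by rwa [div_lt_iff₀ hm', mul_comm] at hx0
  have hy := Nat.le_ceil (m * x)
  have hy' := Nat.ceil_lt_add_one (by positivity : 0 ≤ m * x)
  obtain ⟨l, hl⟩ : ∃ l, ⌈m * x⌉₊ = l + 1 :=
    Nat.exists_eq_add_one.2 (Nat.ceil_pos.2 (by linarith))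
  rw [hl] at hy hy'
  push_cast at hy hy'
  refine ⟨l, ?_, ?_, ?_, ?_⟩
  · exact_mod_cast (show (0 : ℝ) < l by linarith)
  · exact_mod_cast (show (l : ℝ) < m by nlinarith)
  · rw [div_lt_iff₀ hm', mul_comm]; linarith
  · rw [← add_div, le_div_iff₀ hm', mul_comm]; linarith

end Grid

theorem abs_sub_le_of_grid {F G : ℝ → ℝ} (hF : Monotone F) (hG : Monotone G)
    (hF0 : ∀ s, 0 ≤ F s) (hF1 : ∀ s, F s ≤ 1) (hG0 : ∀ s, 0 ≤ G s) (hG1 : ∀ s, G s ≤ 1)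
    {m : ℕ} (hm : 0 < m) {δ : ℝ} (hδ : 0 ≤ δ) {T : ℕ → ℝ}
    (hT : ∀ l, 0 < l → l < m → F (T l) = l / m)
    (hTG : ∀ l, 0 < l → l < m → |G (T l) - F (T l)| ≤ δ) (s : ℝ) :
    |G s - F s| ≤ δ + 1 / m := by
  rw [abs_sub_le_iff]
  constructor
  · by_cases htop : 1 - 1 / m ≤ F s
    · linarith [hG1 s]
    obtain ⟨l, hl0, hlm, hsl, hls⟩ := exists_grid_point_gt hm (hF0 s) (not_le.1 htop)
    rw [← hT l hl0 hlm] at hsl hls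
    have := hG (hF.reflect_lt hsl).le
    linarith [(abs_sub_le_iff.1 (hTG l hl0 hlm)).1]
  · by_cases hbot : F s ≤ 1 / m
    · linarith [hG0 s]
    obtain ⟨l, hl0, hlm, hls, hsl⟩ := exists_grid_point_lt hm (not_le.1 hbot) (hF1 s)
    rw [← hT l hl0 hlm] at hsl hls
    have := hG (hF.reflect_lt hls).le
    linarith [(abs_sub_le_iff.1 (hTG l hl0 hlm)).2]

theorem empiricalCDF_lt_of_isEmpLocQuantile {M : Type*} [MetricSpace M] {n : ℕ}
    {x : Fin n → M} {u : M} {τ : ℝ} {j : Fin n} (hq : IsEmpLocQuantile x u τ j) (hτ : 0 < τ)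
    {s : ℝ} (hs : s < dist u (x j)) : empiricalCDF (fun i => dist u (x i)) s < τ := by
  set y : Fin n → ℝ := fun i => dist u (x i)
  by_contra! hτs
  obtain ⟨i, hi, hmax⟩ : ∃ i ∈ ({i | y i ≤ s} : Finset (Fin n)),
      ∀ k ∈ ({i | y i ≤ s} : Finset (Fin n)), y k ≤ y i := by
    refine Finset.exists_max_image _ y (Finset.nonempty_iff_ne_empty.2 fun hempty => ?_)
    simp only [empiricalCDF, hempty, Finset.card_empty, CharP.cast_eq_zero, zero_div] at hτs
    linarith
  have hsi : empiricalCDF y s ≤ empiricalCDF y (y i) := by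
    refine div_le_div_of_nonneg_right ?_ n.cast_nonneg
    exact_mod_cast Finset.card_le_card fun k hk => by simpa using hmax k hk
  have hij := empiricalCDF_lt_empiricalCDF y (((Finset.mem_filter.1 hi).2).trans_lt hs)
  exact (hq.2 i (hτs.trans hsi)).not_gt hij

theorem abs_sub_le_of_isEmpLocQuantile {M : Type*} [MetricSpace M] {n : ℕ} {x : Fin n → M}
    {u : M} {τ : ℝ} {j : Fin n} (hq : IsEmpLocQuantile x u τ j) (hτ : 0 < τ)
    {F : ℝ → ℝ} (hF : Continuous F) {η : ℝ}
    (hFG : ∀ s, |empiricalCDF (fun i => dist u (x i)) s - F s| ≤ η) :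
    |F (dist u (x j)) - τ| ≤ η := by
  set r := dist u (x j)
  rw [abs_sub_le_iff]
  constructor
  · have hlim : Tendsto F (𝓝[<] r) (𝓝 (F r)) := (hF.tendsto r).mono_left nhdsWithin_le_nhds
    refine sub_le_iff_le_add'.2 <| le_of_tendsto hlim <| eventually_nhdsWithin_of_forall
      fun s hs => ?_
    linarith [(abs_sub_le_iff.1 (hFG s)).2, empiricalCDF_lt_of_isEmpLocQuantile hq hτ hs]
  · have hτr : τ ≤ empiricalCDF (fun i => dist u (x i)) r := hq.1
    linarith [(abs_sub_le_iff.1 (hFG r)).1]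

theorem continuous_cdf (ν : Measure ℝ) [IsProbabilityMeasure ν] [NullSingletonClass ν] :
    Continuous (cdf ν) := by
  refine continuous_iff_continuousAt.2 fun t => continuousAt_iff_continuous_left_right.2
    ⟨continuousWithinAt_Iio_iff_Iic.1 ?_, (cdf ν).right_continuous t⟩
  rw [(cdf ν).mono.continuousWithinAt_Iio_iff_leftLim_eq]
  have hjump := (cdf ν).measure_singleton t
  rw [measure_cdf, measure_singleton, eq_comm, ENNReal.ofReal_eq_zero, sub_nonpos] at hjump
  exact le_antisymm ((cdf ν).mono.leftLim_le le_rfl) hjump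

theorem exists_cdf_eq (ν : Measure ℝ) [IsProbabilityMeasure ν] [NullSingletonClass ν] {q : ℝ}
    (hq : q ∈ Set.Ioo 0 1) : ∃ t, cdf ν t = q :=
  mem_range_of_exists_le_of_exists_ge (continuous_cdf ν)
    (((tendsto_cdf_atBot ν).eventually (gt_mem_nhds hq.1)).exists.imp fun _ => le_of_lt)
    (((tendsto_cdf_atTop ν).eventually (lt_mem_nhds hq.2)).exists.imp fun _ => le_of_lt)

section MetricDistribution

variable {M : Type*} [MetricSpace M] [MeasurableSpace M] [BorelSpace M] (μ : Measure M)

theorem measurable_dist_left (u : M) : Measurable (dist u) :=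
  (continuous_const.dist continuous_id).measurable

theorem nullSingletonClass_map_dist
    (hsph : ∀ (u : M) (r : ℝ), 0 ≤ r → μ {v | dist u v = r} = 0) (u : M) :
    NullSingletonClass (μ.map (dist u)) := by
  refine ⟨fun r => ?_⟩
  rw [Measure.map_apply (measurable_dist_left u) (measurableSet_singleton r)]
  rcases le_or_gt 0 r with hr | hr
  · exact hsph u r hr
  · convert measure_empty (μ := μ)
    exact Set.eq_empty_of_forall_notMem fun v hv => hr.not_ge (hv ▸ dist_nonneg)

theorem mdf_eq_cdf_map_dist [IsProbabilityMeasure μ] (u v : M) :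
    mdf μ u v = cdf (μ.map (dist u)) (dist u v) := by
  have := Measure.isProbabilityMeasure_map (μ := μ) (measurable_dist_left u).aemeasurable
  rw [cdf_eq_real, map_measureReal_apply (measurable_dist_left u) measurableSet_Iic,
    mdf, ← measureReal_def]
  congr 1
  ext w
  simp [dist_comm]

end MetricDistribution

theorem meas_lt_abs_empiricalCDF_sub_cdf_le {Ω : Type*} [MeasurableSpace Ω] {P : Measure Ω}
    [IsProbabilityMeasure P] {ν : Measure ℝ} [IsProbabilityMeasure ν] {Y : ℕ → Ω → ℝ}
    (hY : ∀ i, Measurable (Y i)) (hlaw : ∀ i, P.map (Y i) = ν) (hindep : iIndepFun Y P)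
    (t : ℝ) {n : ℕ} (hn : 0 < n) {δ : ℝ} (hδ : 0 < δ) :
    P {ω | δ < |empiricalCDF (fun i : Fin n => Y i ω) t - cdf ν t|} ≤
      ENNReal.ofReal (1 / (4 * n * δ ^ 2)) := by
  set g : ℝ → ℝ := (Set.Iic t).indicator 1
  have hg : Measurable g := measurable_one.indicator measurableSet_Iic
  set Z : Fin n → Ω → ℝ := fun i => g ∘ Y i
  have hZ01 : ∀ i ω, Z i ω ∈ Set.Icc (0 : ℝ) 1 := fun i ω => by
    by_cases h : Y i ω ≤ t <;> simp [Z, g, h]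
  have hZ : ∀ i, MemLp (Z i) 2 P := fun i =>
    MemLp.of_bound (hg.comp (hY i)).aestronglyMeasurable 1 (ae_of_all _ fun ω => by
      rw [Real.norm_eq_abs, abs_le]; constructor <;> linarith [(hZ01 i ω).1, (hZ01 i ω).2])
  have hmean : ∀ i, P[Z i] = cdf ν t := fun i => by
    rw [cdf_eq_real, ← integral_indicator_one measurableSet_Iic, ← hlaw i,
      integral_map (hY i).aemeasurable hg.aestronglyMeasurable]
    rfl
  set W : Ω → ℝ := fun ω => (n : ℝ)⁻¹ * (∑ i, Z i) ω
  have hW : ∀ ω, empiricalCDF (fun i : Fin n => Y i ω) t = W ω := fun ω => by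
    simp [W, Z, g, empiricalCDF, Set.indicator_apply, Finset.sum_boole, div_eq_inv_mul]
  have hWmem : MemLp W 2 P := (memLp_finsetSum' _ fun i _ => hZ i).const_mul _
  have hEW : P[W] = cdf ν t := by
    simp only [W, Finset.sum_apply, integral_const_mul,
      integral_finsetSum _ fun i _ => (hZ i).integrable one_le_two, hmean, Finset.sum_const,
      Finset.card_univ, Fintype.card_fin, nsmul_eq_mul]
    field_simp
  have hvar : Var[W; P] ≤ 1 / (4 * n) := by
    have hsum : Var[∑ i, Z i; P] = ∑ i, Var[Z i; P] :=
      IndepFun.variance_sum (fun i _ => hZ i) fun i _ j _ hij =>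
        (hindep.indepFun (Fin.val_injective.ne hij)).comp hg hg
    have hZvar : ∀ i, Var[Z i; P] ≤ 1 / 4 := fun i => by
      have := variance_le_sq_of_bounded (ae_of_all _ (hZ01 i)) (hZ i).aemeasurable
      norm_num at this ⊢
      exact this
    have hn' : (0 : ℝ) < n := by exact_mod_cast hn
    calc Var[W; P] = (n : ℝ)⁻¹ ^ 2 * ∑ i, Var[Z i; P] := by rw [variance_const_mul, hsum]
      _ ≤ (n : ℝ)⁻¹ ^ 2 * (n * (1 / 4)) := by
        gcongr
        simpa using Finset.sum_le_sum fun i (_ : i ∈ Finset.univ) => hZvar i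
      _ = 1 / (4 * n) := by field_simp
  calc P {ω | δ < |empiricalCDF (fun i : Fin n => Y i ω) t - cdf ν t|}
      ≤ P {ω | δ ≤ |W ω - P[W]|} := measure_mono fun ω (hω : δ < _) => by
        rw [Set.mem_ofPred, hEW, ← hW ω]
        exact hω.le
    _ ≤ ENNReal.ofReal (Var[W; P] / δ ^ 2) := meas_ge_le_variance_div_sq hWmem hδ
    _ ≤ ENNReal.ofReal (1 / (4 * n) / δ ^ 2) := by gcongr
    _ = ENNReal.ofReal (1 / (4 * n * δ ^ 2)) := by rw [div_div]

theorem measure_exists_isEmpLocQuantile_deviation_le {M : Type*} [MetricSpace M]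
    [MeasurableSpace M] [BorelSpace M] (μ : Measure M) [IsProbabilityMeasure μ]
    (hsph : ∀ (u : M) (r : ℝ), 0 ≤ r → μ {v | dist u v = r} = 0)
    {Ω : Type*} [MeasurableSpace Ω] {P : Measure Ω} [IsProbabilityMeasure P] {X : ℕ → Ω → M}
    (hXmeas : ∀ i, Measurable (X i)) (hXlaw : ∀ i, P.map (X i) = μ) (hXindep : iIndepFun X P)
    (u : M) {τ : ℝ} (hτ : 0 < τ) {m n : ℕ} (hm : 0 < m) (hn : 0 < n) {δ : ℝ} (hδ : 0 < δ) :
    P {ω | ∃ j : Fin n, IsEmpLocQuantile (fun i : Fin n => X i ω) u τ j ∧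
        δ + 1 / m < |mdf μ u (X j ω) - τ|} ≤ m * ENNReal.ofReal (1 / (4 * n * δ ^ 2)) := by
  set ν := μ.map (dist u)
  have := Measure.isProbabilityMeasure_map (μ := μ) (measurable_dist_left u).aemeasurable
  have := nullSingletonClass_map_dist μ hsph u
  set Y : ℕ → Ω → ℝ := fun i => dist u ∘ X i
  have hYmeas : ∀ i, Measurable (Y i) := fun i => (measurable_dist_left u).comp (hXmeas i)
  have hYlaw : ∀ i, P.map (Y i) = ν := fun i => by
    rw [← Measure.map_map (measurable_dist_left u) (hXmeas i), hXlaw i]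
  have hYindep : iIndepFun Y P := hXindep.comp _ fun _ => measurable_dist_left u
  have hgrid : ∀ l : ℕ, ∃ t, 0 < l → l < m → cdf ν t = l / m := fun l => by
    by_cases hl : 0 < l ∧ l < m
    · have hm' : (0 : ℝ) < m := by exact_mod_cast hm
      obtain ⟨t, ht⟩ := exists_cdf_eq ν (q := l / m)
        ⟨by have := hl.1; positivity, (div_lt_one hm').2 (by exact_mod_cast hl.2)⟩
      exact ⟨t, fun _ _ => ht⟩
    · exact ⟨0, fun hl0 hlm => absurd ⟨hl0, hlm⟩ hl⟩
  choose T hT using hgrid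
  calc _ ≤ P (⋃ l ∈ Finset.range m,
        {ω | δ < |empiricalCDF (fun i : Fin n => Y i ω) (T l) - cdf ν (T l)|}) := by
        refine measure_mono fun ω ⟨j, hq, hdev⟩ => ?_
        by_contra hgood
        simp only [Set.mem_iUnion, Set.mem_ofPred, Finset.mem_range, not_exists, not_lt] at hgood
        refine hdev.not_ge ?_
        rw [mdf_eq_cdf_map_dist]
        exact abs_sub_le_of_isEmpLocQuantile hq hτ (continuous_cdf ν)
          (abs_sub_le_of_grid (cdf ν).mono (monotone_empiricalCDF _) (cdf_nonneg ν)
            (cdf_le_one ν) (empiricalCDF_nonneg _) (empiricalCDF_le_one _) hm hδ.le hT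
            fun l _ hl => hgood l hl)
    _ ≤ ∑ l ∈ Finset.range m,
        P {ω | δ < |empiricalCDF (fun i : Fin n => Y i ω) (T l) - cdf ν (T l)|} :=
      measure_biUnion_finset_le _ _
    _ ≤ ∑ l ∈ Finset.range m, ENNReal.ofReal (1 / (4 * n * δ ^ 2)) :=
      Finset.sum_le_sum fun l _ =>
        meas_lt_abs_empiricalCDF_sub_cdf_le hYmeas hYlaw hYindep (T l) hn hδ
    _ = m * ENNReal.ofReal (1 / (4 * n * δ ^ 2)) := by simp

theorem emp_local_quantile_uniform_consistency_general
    {M : Type*} [MetricSpace M]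
    [MeasurableSpace M] [BorelSpace M]
    (μ : Measure M) [IsProbabilityMeasure μ]
    (hsph : ∀ (u : M) (r : ℝ), 0 ≤ r → μ {v | dist u v = r} = 0)
    {Ω : Type*} [MeasureSpace Ω] [IsProbabilityMeasure (ℙ : Measure Ω)]
    (X : ℕ → Ω → M)
    (hXmeas : ∀ i, Measurable (X i))
    (hXlaw : ∀ i, Measure.map (X i) ℙ = μ)
    (hXindep : iIndepFun X ℙ) :
    ∀ ε > (0 : ℝ), Tendsto (fun n : ℕ =>
      ⨆ (u : M) (τ : ℝ) (_ : τ ∈ Set.Icc (1 / (n : ℝ)) 1),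
        (ℙ : Measure Ω) {ω | ∃ j : Fin n,
          IsEmpLocQuantile (fun i : Fin n => X i ω) u τ j ∧ |mdf μ u (X j ω) - τ| > ε})
      atTop (nhds (0 : ENNReal)) := by
  intro ε hε
  obtain ⟨k, hk⟩ := exists_nat_one_div_lt (half_pos hε)
  have hlim : Tendsto (fun n : ℕ => ((k + 1 : ℕ) : ℝ≥0∞) *
      ENNReal.ofReal (1 / (4 * n * (ε / 2) ^ 2))) atTop (𝓝 0) := by
    have hden : Tendsto (fun n : ℕ => 4 * (n : ℝ) * (ε / 2) ^ 2) atTop atTop :=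
      (tendsto_natCast_atTop_atTop.const_mul_atTop four_pos).atTop_mul_const (by positivity)
    have := ENNReal.Tendsto.const_mul
      (ENNReal.tendsto_ofReal ((tendsto_const_nhds (x := (1 : ℝ))).div_atTop hden))
      (Or.inr (ENNReal.natCast_ne_top (k + 1)))
    rwa [ENNReal.ofReal_zero, mul_zero] at this
  refine tendsto_of_tendsto_of_tendsto_of_le_of_le' tendsto_const_nhds hlim
    (Eventually.of_forall fun _ => zero_le) ?_
  filter_upwards [eventually_gt_atTop 0] with n hn
  refine iSup_le fun u => iSup₂_le fun τ hτ => le_trans ?_ <|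
    measure_exists_isEmpLocQuantile_deviation_le μ hsph hXmeas hXlaw hXindep u
      ((one_div_pos.2 (Nat.cast_pos.2 hn)).trans_le hτ.1) k.succ_pos hn (half_pos hε)
  exact measure_mono fun ω ⟨j, hq, hdev⟩ => ⟨j, hq, by push_cast at hk ⊢; linarith⟩

/-- Uniform consistency of the empirical local metric quantile: under the
entropy (Glivenko–Cantelli) condition and nullity of spheres, for every `ε > 0` the outer
probability that some `τ`-th empirical local quantile `X_j` at `u` has
`|F_μ(u,X_j) − τ| > ε`, taken `sup` over `u ∈ M` and `τ ∈ [1/n,1]`, tends to `0`. -/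
theorem emp_local_quantile_uniform_consistency
    {M : Type*} [MetricSpace M] [TopologicalSpace.SeparableSpace M]
    [MeasurableSpace M] [BorelSpace M]
    (μ : Measure M) [IsProbabilityMeasure μ]
    (hsph : ∀ (u : M) (r : ℝ), 0 ≤ r → μ {v | dist u v = r} = 0)
    {Ω : Type*} [MeasureSpace Ω] [IsProbabilityMeasure (ℙ : Measure Ω)]
    (X : ℕ → Ω → M)
    (hXmeas : ∀ i, Measurable (X i))
    (hXlaw : ∀ i, Measure.map (X i) ℙ = μ)
    (hXindep : iIndepFun X ℙ)
    (hentropy : Tendsto (fun n : ℕ =>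
      (1 / (n : ℝ)) * ∫ ω, Real.log (Nat.card
        {b : Fin n → Prop // ∃ u v : M, ∀ i : Fin n, b i ↔ dist u (X i ω) ≤ dist u v}) ∂ℙ)
      atTop (nhds 0)) :
    ∀ ε > (0 : ℝ), Tendsto (fun n : ℕ =>
      ⨆ (u : M) (τ : ℝ) (_ : τ ∈ Set.Icc (1 / (n : ℝ)) 1),
        (ℙ : Measure Ω) {ω | ∃ j : Fin n,
          IsEmpLocQuantile (fun i : Fin n => X i ω) u τ j ∧ |mdf μ u (X j ω) - τ| > ε})
      atTop (nhds (0 : ENNReal)) :=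
  emp_local_quantile_uniform_consistency_general μ hsph X hXmeas hXlaw hXindep
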